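/- Let 1/2 < b ≤ 1, s > 1/2, and a ≤ 2 − 2b. Then sup over k of Σ_{k₁,k₂} ⟨k⟩^{2a−2+2b} ⟨k₁⟩^{-2s} ⟨k₂⟩^{-2s+2−2b} / (⟨k−k₁⟩^{2−2b} ⟨k₁−k₂⟩^{2−2b}) is finite. -/

import Mathlib

open scoped BigOperators

/-- Japanese bracket `⟨x⟩ = (1+x²)^{1/2}`. -/
noncomputable def jb (x : ℝ) : ℝ := Real.sqrt (1 + x ^ 2)

/-!
With `c = 2 - 2b ∈ [0, 1]`, bound `⟨k⟩^{2a-2+2b}` by `⟨k⟩^c`; the summand is then at most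
`u(k, k₁) v(k₁, k₂)` with `u(k, n) = ⟨k⟩^c ⟨n⟩^{-2s} ⟨k-n⟩^{-c}` and
`v(m, n) = ⟨n⟩^{-(2s-c)} ⟨m-n⟩^{-c}`. The sum of `v(m, ·)` is a convolution of total exponent
`2s > 1`: the product of the two brackets is at most the `(-2s)`-th power of the smaller one.
For `u(k, ·)`, `⟨k⟩ ≤ ⟨n⟩ + ⟨k-n⟩` and subadditivity of `x ↦ x^c` give
`⟨k⟩^c ⟨k-n⟩^{-c} ≤ ⟨n⟩^c ⟨k-n⟩^{-c} + 1`, reducing it to the same convolution plus `Σ ⟨n⟩^{-2s}`.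
-/

lemma one_le_jb (x : ℝ) : 1 ≤ jb x :=
  Real.one_le_sqrt.mpr (by nlinarith [sq_nonneg x])

lemma jb_pos (x : ℝ) : 0 < jb x := one_pos.trans_le (one_le_jb x)

lemma jb_rpow_nonneg (x t : ℝ) : 0 ≤ jb x ^ t := Real.rpow_nonneg (jb_pos x).le t

lemma sq_jb (x : ℝ) : jb x ^ 2 = 1 + x ^ 2 := Real.sq_sqrt (by positivity)

lemma abs_le_jb (x : ℝ) : |x| ≤ jb x := by
  rw [← Real.sqrt_sq_eq_abs]
  exact Real.sqrt_le_sqrt (by linarith)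

lemma jb_add_le (x y : ℝ) : jb (x + y) ≤ jb x + jb y := by
  have hxy : x * y ≤ jb x * jb y := (le_abs_self _).trans <| (abs_mul x y).symm ▸
    mul_le_mul (abs_le_jb x) (abs_le_jb y) (abs_nonneg _) (jb_pos _).le
  rw [jb, Real.sqrt_le_iff]
  refine ⟨by linarith [jb_pos x, jb_pos y], ?_⟩
  nlinarith [sq_jb x, sq_jb y]

lemma summable_jb_rpow_neg {t : ℝ} (ht : 1 < t) : Summable fun n : ℤ => jb n ^ (-t) := by
  refine (Real.summable_abs_int_rpow ht).of_norm_bounded_eventually ?_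
  filter_upwards [(Set.finite_singleton (0 : ℤ)).compl_mem_cofinite] with n hn
  have hn : (0 : ℝ) < |(n : ℝ)| := by simpa using hn
  rw [Real.norm_of_nonneg (jb_rpow_nonneg _ _)]
  exact Real.rpow_le_rpow_of_nonpos hn (abs_le_jb n) (by linarith)

lemma sum_jb_sub_rpow_neg_le_tsum {t : ℝ} (ht : 1 < t) (m : ℤ) (G : Finset ℤ) :
    ∑ n ∈ G, jb (m - n) ^ (-t) ≤ ∑' n : ℤ, jb n ^ (-t) := by
  have hs := (summable_jb_rpow_neg ht).comp_injective (sub_right_injective (b := m))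
  calc ∑ n ∈ G, jb (m - n) ^ (-t) = ∑ n ∈ G, jb ((m - n : ℤ) : ℝ) ^ (-t) := by push_cast; rfl
    _ ≤ ∑' n : ℤ, jb ((m - n : ℤ) : ℝ) ^ (-t) :=
      hs.sum_le_tsum G fun n _ => jb_rpow_nonneg _ _
    _ = ∑' n : ℤ, jb n ^ (-t) := (Equiv.subLeft m).tsum_eq fun n : ℤ => jb n ^ (-t)

lemma Real.rpow_neg_mul_rpow_neg_le_add {x y α γ : ℝ} (hx : 0 < x) (hy : 0 < y) (hα : 0 ≤ α)
    (hγ : 0 ≤ γ) : x ^ (-α) * y ^ (-γ) ≤ x ^ (-(α + γ)) + y ^ (-(α + γ)) := by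
  rw [neg_add, Real.rpow_add hx, Real.rpow_add hy]
  rcases le_total x y with h | h
  · have : y ^ (-γ) ≤ x ^ (-γ) := Real.rpow_le_rpow_of_nonpos hx h (by linarith)
    nlinarith [Real.rpow_pos_of_pos hx (-α), Real.rpow_pos_of_pos hy (-α),
      Real.rpow_pos_of_pos hy (-γ)]
  · have : x ^ (-α) ≤ y ^ (-α) := Real.rpow_le_rpow_of_nonpos hy h (by linarith)
    nlinarith [Real.rpow_pos_of_pos hx (-α), Real.rpow_pos_of_pos hx (-γ),
      Real.rpow_pos_of_pos hy (-γ)]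

lemma sum_jb_rpow_neg_mul_jb_sub_rpow_neg_le {t γ : ℝ} (ht : 1 < t) (hγ : 0 ≤ γ) (hγt : γ ≤ t)
    (m : ℤ) (G : Finset ℤ) :
    ∑ n ∈ G, jb n ^ (-(t - γ)) * jb (m - n) ^ (-γ) ≤ 2 * ∑' n : ℤ, jb n ^ (-t) := by
  have hpoint (n : ℤ) :
      jb n ^ (-(t - γ)) * jb (m - n) ^ (-γ) ≤ jb n ^ (-t) + jb (m - n) ^ (-t) := by
    simpa using Real.rpow_neg_mul_rpow_neg_le_add (jb_pos n) (jb_pos (m - n)) (sub_nonneg.2 hγt) hγ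
  calc ∑ n ∈ G, jb n ^ (-(t - γ)) * jb (m - n) ^ (-γ)
      ≤ ∑ n ∈ G, jb n ^ (-t) + ∑ n ∈ G, jb (m - n) ^ (-t) :=
        (Finset.sum_le_sum fun n _ => hpoint n).trans_eq Finset.sum_add_distrib
    _ ≤ ∑' n : ℤ, jb n ^ (-t) + ∑' n : ℤ, jb n ^ (-t) := by
        gcongr
        · exact (summable_jb_rpow_neg ht).sum_le_tsum G fun n _ => jb_rpow_nonneg _ _
        · exact sum_jb_sub_rpow_neg_le_tsum ht m G
    _ = 2 * ∑' n : ℤ, jb n ^ (-t) := (two_mul _).symm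

lemma sum_jb_rpow_mul_jb_rpow_neg_mul_jb_sub_rpow_neg_le {t c : ℝ} (ht : 1 < t) (hc : 0 ≤ c)
    (hc1 : c ≤ 1) (hct : c ≤ t) (k : ℤ) (G : Finset ℤ) :
    ∑ n ∈ G, jb k ^ c * jb n ^ (-t) * jb (k - n) ^ (-c) ≤ 3 * ∑' n : ℤ, jb n ^ (-t) := by
  have hpoint (n : ℤ) : jb k ^ c * jb n ^ (-t) * jb (k - n) ^ (-c) ≤
      jb n ^ (-(t - c)) * jb (k - n) ^ (-c) + jb n ^ (-t) := by
    have hk : jb k ^ c ≤ jb n ^ c + jb (k - n) ^ c :=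
      calc jb k ^ c ≤ (jb n + jb (k - n)) ^ c := by
            gcongr
            · exact (jb_pos k).le
            · simpa using jb_add_le n (k - n)
        _ ≤ jb n ^ c + jb (k - n) ^ c :=
            Real.rpow_add_le_add_rpow (jb_pos n).le (jb_pos _).le hc hc1
    have hn : jb n ^ c * jb n ^ (-t) = jb n ^ (-(t - c)) := by
      rw [← Real.rpow_add (jb_pos n)]; ring_nf
    have hkn : jb (k - n) ^ c * jb (k - n) ^ (-c) = 1 := by
      rw [← Real.rpow_add (jb_pos _), add_neg_cancel, Real.rpow_zero]
    calc jb k ^ c * jb n ^ (-t) * jb (k - n) ^ (-c)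
        ≤ (jb n ^ c + jb (k - n) ^ c) * jb n ^ (-t) * jb (k - n) ^ (-c) := by
          gcongr <;> apply jb_rpow_nonneg
      _ = jb n ^ c * jb n ^ (-t) * jb (k - n) ^ (-c) +
            jb (k - n) ^ c * jb (k - n) ^ (-c) * jb n ^ (-t) := by ring
      _ = jb n ^ (-(t - c)) * jb (k - n) ^ (-c) + jb n ^ (-t) := by rw [hn, hkn, one_mul]
  calc ∑ n ∈ G, jb k ^ c * jb n ^ (-t) * jb (k - n) ^ (-c)
      ≤ ∑ n ∈ G, jb n ^ (-(t - c)) * jb (k - n) ^ (-c) + ∑ n ∈ G, jb n ^ (-t) :=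
        (Finset.sum_le_sum fun n _ => hpoint n).trans_eq Finset.sum_add_distrib
    _ ≤ 2 * ∑' n : ℤ, jb n ^ (-t) + ∑' n : ℤ, jb n ^ (-t) := by
        gcongr
        · exact sum_jb_rpow_neg_mul_jb_sub_rpow_neg_le ht hc hct k G
        · exact (summable_jb_rpow_neg ht).sum_le_tsum G fun n _ => jb_rpow_nonneg _ _
    _ = 3 * ∑' n : ℤ, jb n ^ (-t) := by ring

lemma Finset.sum_mul_le_mul_of_forall_sum_le {α β : Type*} [Nonempty α] (F : Finset (α × β))
    {u : α → ℝ} {v : α → β → ℝ} {A B : ℝ} (hu : ∀ a, 0 ≤ u a) (hv : ∀ a b, 0 ≤ v a b)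
    (hA : ∀ G : Finset α, ∑ a ∈ G, u a ≤ A) (hB : ∀ a (G : Finset β), ∑ b ∈ G, v a b ≤ B) :
    ∑ p ∈ F, u p.1 * v p.1 p.2 ≤ A * B := by
  classical
  have hB0 : 0 ≤ B := by simpa using hB (Classical.arbitrary α) ∅
  calc ∑ p ∈ F, u p.1 * v p.1 p.2
      ≤ ∑ p ∈ F.image Prod.fst ×ˢ F.image Prod.snd, u p.1 * v p.1 p.2 :=
        Finset.sum_le_sum_of_subset_of_nonneg Finset.subset_product
          fun p _ _ => mul_nonneg (hu _) (hv _ _)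
    _ = ∑ a ∈ F.image Prod.fst, u a * ∑ b ∈ F.image Prod.snd, v a b := by
        simp only [Finset.sum_product, Finset.mul_sum]
    _ ≤ ∑ a ∈ F.image Prod.fst, u a * B :=
        Finset.sum_le_sum fun a _ => mul_le_mul_of_nonneg_left (hB a _) (hu a)
    _ ≤ A * B := by rw [← Finset.sum_mul]; exact mul_le_mul_of_nonneg_right (hA _) hB0

lemma jb_rpow_mul_div_le_mul {k x y e c t : ℝ} (he : e ≤ c) :
    jb k ^ e * jb x ^ (-t) * jb y ^ (-(t - c)) / (jb (k - x) ^ c * jb (x - y) ^ c) ≤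
      jb k ^ c * jb x ^ (-t) * jb (k - x) ^ (-c) * (jb y ^ (-(t - c)) * jb (x - y) ^ (-c)) := by
  have hR : 0 ≤ jb x ^ (-t) * (jb (k - x) ^ c)⁻¹ * (jb y ^ (-(t - c)) * (jb (x - y) ^ c)⁻¹) :=
    mul_nonneg (mul_nonneg (jb_rpow_nonneg _ _) (inv_nonneg.2 (jb_rpow_nonneg _ _)))
      (mul_nonneg (jb_rpow_nonneg _ _) (inv_nonneg.2 (jb_rpow_nonneg _ _)))
  rw [Real.rpow_neg (jb_pos (k - x)).le, Real.rpow_neg (jb_pos (x - y)).le]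
  calc _ = jb k ^ e * (jb x ^ (-t) * (jb (k - x) ^ c)⁻¹ *
          (jb y ^ (-(t - c)) * (jb (x - y) ^ c)⁻¹)) := by ring
    _ ≤ jb k ^ c * (jb x ^ (-t) * (jb (k - x) ^ c)⁻¹ *
          (jb y ^ (-(t - c)) * (jb (x - y) ^ c)⁻¹)) :=
      mul_le_mul_of_nonneg_right (Real.rpow_le_rpow_of_exponent_le (one_le_jb k) he) hR
    _ = _ := by ring

theorem stmt8 (s b a : ℝ) (hb1 : 1 / 2 < b) (hb2 : b ≤ 1) (hs : 1 / 2 < s)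
    (ha : a ≤ 2 - 2 * b) :
    ∃ C : ℝ, ∀ (k : ℤ) (F : Finset (ℤ × ℤ)),
      ∑ p ∈ F,
        jb (k : ℝ) ^ (2 * a - 2 + 2 * b) * jb (p.1 : ℝ) ^ (-(2 * s)) *
            jb (p.2 : ℝ) ^ (-(2 * s) + 2 - 2 * b) /
          (jb ((k : ℝ) - p.1) ^ (2 - 2 * b) * jb ((p.1 : ℝ) - p.2) ^ (2 - 2 * b))
        ≤ C := by
  set c := 2 - 2 * b
  set S := ∑' n : ℤ, jb n ^ (-(2 * s))
  have hexp : -(2 * s) + 2 - 2 * b = -(2 * s - c) := by ring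
  refine ⟨3 * S * (2 * S), fun k F => ?_⟩
  simp only [hexp]
  calc _ ≤ _ := Finset.sum_le_sum fun p _ => jb_rpow_mul_div_le_mul (by linarith)
    _ ≤ 3 * S * (2 * S) :=
      Finset.sum_mul_le_mul_of_forall_sum_le F
        (u := fun n => jb k ^ c * jb n ^ (-(2 * s)) * jb (k - n) ^ (-c))
        (v := fun m n => jb n ^ (-(2 * s - c)) * jb (m - n) ^ (-c))
        (fun n => mul_nonneg (mul_nonneg (jb_rpow_nonneg _ _) (jb_rpow_nonneg _ _))
          (jb_rpow_nonneg _ _))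
        (fun m n => mul_nonneg (jb_rpow_nonneg _ _) (jb_rpow_nonneg _ _))
        (sum_jb_rpow_mul_jb_rpow_neg_mul_jb_sub_rpow_neg_le (by linarith) (by linarith)
          (by linarith) (by linarith) k)
        (sum_jb_rpow_neg_mul_jb_sub_rpow_neg_le (by linarith) (by linarith) (by linarith))
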